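/- Let g : [0, n+1/2] → ℝ be a continuous piecewise-linear function encoded by a slope sequence satisfying (C1) σ_{1,1} = 1 and (C2) σ_{j,2} = 1 ⟹ σ_{j+1,1} = 1, with g(0) = −1/2. Assume M := max g > g(n + 1/2), and let k satisfy k − 1/2 = max g⁻¹(M). Then k ≤ n, σ_{k+1} ∈ {(−1,−1), −1}, g(k + 1/2) = M − 1, and g(x) ≤ M − 1 for all k + 1/2 ≤ x ≤ n + 1/2. -/

import Mathlib

/-!
On the half-integer grid `g (t / 2) = plVal t`, and since every slope is `±1` the number
`2 g (t / 2) + t` stays odd; so `g` is integer-valued at the points `j + 1/2`. After the last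
maximum `k - 1/2` these values are therefore `≤ M - 1`, which at `k + 1/2` forces both slopes on
`(k - 1/2, k + 1/2)` to be `-1`. At an integer point `j + 1` after the maximum `g ≤ M - 3/2`:
a slope `+1` into it continues as `+1` by (C2), and as the value at `j + 3/2` is `≤ M - 1`, the
value at `j + 1/2` is `≤ M - 2`.
As `g` interpolates linearly between grid values, `g ≤ M - 1` on `[k + 1/2, n + 1/2]`.
-/

/-- The slope data: `σ_j = (σ_{j,1}, σ_{j,2})` for `1 ≤ j ≤ n` (0-indexed here) and the
final single slope `σ_{n+1} = σlast`. -/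
def sigFull (n : ℕ) (σ : Fin n → ℤ × ℤ) (σlast : ℤ) (j : ℕ) : ℤ × ℤ :=
  if h : j < n then σ ⟨j, h⟩ else (σlast, σlast)

/-- The slope of `g` on the half-integer interval `(t/2, (t+1)/2)`:
`σ_{j,1}` on `(j-1, j-1/2)` and `σ_{j,2}` on `(j-1/2, j)`, and `σ_{n+1}` on `(n, n+1/2)`. -/
def plSlope (n : ℕ) (σ : Fin n → ℤ × ℤ) (σlast : ℤ) (t : ℕ) : ℤ :=
  if t % 2 = 0 then (sigFull n σ σlast (t / 2)).1 else (sigFull n σ σlast (t / 2)).2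

/-- The values of `g` at the half-integer grid points `t/2`, with `g(0) = -1/2`. -/
noncomputable def plVal (n : ℕ) (σ : Fin n → ℤ × ℤ) (σlast : ℤ) : ℕ → ℝ
  | 0 => -1/2
  | t + 1 => plVal n σ σlast t + (plSlope n σ σlast t : ℝ) / 2

/-- The continuous piecewise-linear function `g : [0, n+1/2] → ℝ` with `g(0) = -1/2`
encoded by the slope sequence `(σ_1, …, σ_n, σ_{n+1})`. -/
noncomputable def plFun (n : ℕ) (σ : Fin n → ℤ × ℤ) (σlast : ℤ) (x : ℝ) : ℝ :=
  let t : ℕ := (⌊2 * x⌋).toNat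
  plVal n σ σlast t + (x - t / 2) * (plSlope n σ σlast t : ℝ)

section

variable {n : ℕ} {σ : Fin n → ℤ × ℤ} {σlast : ℤ}

theorem plVal_succ (t : ℕ) :
    plVal n σ σlast (t + 1) = plVal n σ σlast t + (plSlope n σ σlast t : ℝ) / 2 :=
  rfl

theorem plSlope_two_mul (j : ℕ) : plSlope n σ σlast (2 * j) = (sigFull n σ σlast j).1 := by
  simp [plSlope]

theorem plSlope_two_mul_add_one (j : ℕ) :
    plSlope n σ σlast (2 * j + 1) = (sigFull n σ σlast j).2 := by
  simp [plSlope, Nat.add_mod, Nat.add_div]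

theorem plSlope_eq_one_or_neg_one
    (hσ : ∀ j : Fin n, ((σ j).1 = 1 ∨ (σ j).1 = -1) ∧ ((σ j).2 = 1 ∨ (σ j).2 = -1))
    (hlast : σlast = 1 ∨ σlast = -1) (t : ℕ) :
    plSlope n σ σlast t = 1 ∨ plSlope n σ σlast t = -1 := by
  unfold plSlope sigFull
  split_ifs
  exacts [(hσ _).1, hlast, (hσ _).2, hlast]

theorem plFun_half (t : ℕ) : plFun n σ σlast ((t : ℝ) / 2) = plVal n σ σlast t := by
  have h : (2 : ℝ) * ((t : ℝ) / 2) = ((t : ℤ) : ℝ) := by push_cast; ring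
  simp [plFun, h]

theorem plFun_le_max (x : ℝ) (hx : 0 ≤ x) :
    plFun n σ σlast x ≤
      max (plVal n σ σlast ⌊2 * x⌋₊) (plVal n σ σlast (⌊2 * x⌋₊ + 1)) := by
  set t := ⌊2 * x⌋₊
  have h₀ : (t : ℝ) ≤ 2 * x := Nat.floor_le (by positivity)
  have h₁ : 2 * x < t + 1 := Nat.lt_floor_add_one _
  have hg : plFun n σ σlast x =
      (1 - (2 * x - t)) * plVal n σ σlast t + (2 * x - t) * plVal n σ σlast (t + 1) := by
    simp only [plFun, Int.floor_toNat, plVal_succ]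
    ring
  rw [hg]
  rcases le_total (plVal n σ σlast t) (plVal n σ σlast (t + 1)) with h | h
  · nlinarith [le_max_right (plVal n σ σlast t) (plVal n σ σlast (t + 1))]
  · nlinarith [le_max_left (plVal n σ σlast t) (plVal n σ σlast (t + 1))]

theorem exists_plVal_eq_int_sub
    (hS : ∀ t, plSlope n σ σlast t = 1 ∨ plSlope n σ σlast t = -1) (t : ℕ) :
    ∃ m : ℤ, plVal n σ σlast t = m - ((t : ℝ) + 1) / 2 := by
  induction t with
  | zero => exact ⟨0, by norm_num [plVal]⟩
  | succ t ih =>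
    obtain ⟨m, hm⟩ := ih
    rcases hS t with h | h
    · exact ⟨m + 1, by rw [plVal_succ, hm, h]; push_cast; ring⟩
    · exact ⟨m, by rw [plVal_succ, hm, h]; push_cast; ring⟩

theorem exists_plVal_two_mul_add_one_eq_int
    (hS : ∀ t, plSlope n σ σlast t = 1 ∨ plSlope n σ σlast t = -1) (j : ℕ) :
    ∃ m : ℤ, plVal n σ σlast (2 * j + 1) = m := by
  obtain ⟨m, hm⟩ := exists_plVal_eq_int_sub hS (2 * j + 1)
  exact ⟨m - (j + 1), by rw [hm]; push_cast; ring⟩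

theorem plVal_lt_of_lt_isGreatest {M x₀ : ℝ}
    (hM : IsGreatest (plFun n σ σlast '' Set.Icc 0 ((n : ℝ) + 1/2)) M)
    (hx₀ : IsGreatest
      {x : ℝ | x ∈ Set.Icc (0 : ℝ) ((n : ℝ) + 1/2) ∧ plFun n σ σlast x = M} x₀)
    {t : ℕ} (ht : x₀ < (t : ℝ) / 2) (htn : t ≤ 2 * n + 1) : plVal n σ σlast t < M := by
  have hmem : (t : ℝ) / 2 ∈ Set.Icc (0 : ℝ) ((n : ℝ) + 1/2) := by
    have : (t : ℝ) ≤ 2 * n + 1 := by exact_mod_cast htn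
    constructor <;> [positivity; linarith]
  rw [← plFun_half]
  refine (hM.2 ⟨_, hmem, rfl⟩).lt_of_ne fun heq => ?_
  exact ht.not_ge (hx₀.2 ⟨hmem, heq⟩)

theorem plFun_le_of_plVal_le {a b : ℕ} {c : ℝ}
    (h : ∀ t, a ≤ t → t ≤ b → plVal n σ σlast t ≤ c) :
    ∀ x ∈ Set.Icc ((a : ℝ) / 2) ((b : ℝ) / 2), plFun n σ σlast x ≤ c := by
  rintro x ⟨hax, hxb⟩
  rcases hxb.eq_or_lt with rfl | hxb
  · rw [plFun_half]
    exact h b (by exact_mod_cast (div_le_div_iff_of_pos_right two_pos).1 hax) le_rfl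
  have hx : 0 ≤ x := le_trans (by positivity) hax
  have hat : a ≤ ⌊2 * x⌋₊ := Nat.le_floor (by linarith)
  have htb : ⌊2 * x⌋₊ + 1 ≤ b := by
    have := Nat.floor_lt (by positivity : 0 ≤ 2 * x) |>.2 (by linarith : 2 * x < b)
    omega
  exact (plFun_le_max x hx).trans (max_le (h _ hat (by omega)) (h _ (by omega) htb))

-- The last maximum sits at the grid point `2 * k + 1`, i.e. at `k + 1/2`: this `k` is the
-- theorem's `k` minus one.
variable {k : ℕ}

theorem plVal_odd_le_sub_one
    (hS : ∀ t, plSlope n σ σlast t = 1 ∨ plSlope n σ σlast t = -1)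
    (hmax : ∀ t, 2 * k + 1 < t → t ≤ 2 * n + 1 →
      plVal n σ σlast t < plVal n σ σlast (2 * k + 1))
    {j : ℕ} (hkj : k < j) (hjn : j ≤ n) :
    plVal n σ σlast (2 * j + 1) ≤ plVal n σ σlast (2 * k + 1) - 1 := by
  obtain ⟨a, ha⟩ := exists_plVal_two_mul_add_one_eq_int hS j
  obtain ⟨b, hb⟩ := exists_plVal_two_mul_add_one_eq_int hS k
  have hlt := hmax (2 * j + 1) (by omega) (by omega)
  rw [ha, hb] at hlt ⊢
  have : a ≤ b - 1 := by exact_mod_cast Int.le_sub_one_of_lt (by exact_mod_cast hlt)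
  exact_mod_cast this

theorem plVal_even_le_sub_three_halves
    (hS : ∀ t, plSlope n σ σlast t = 1 ∨ plSlope n σ σlast t = -1)
    (hC2 : ∀ j < n, (sigFull n σ σlast j).2 = 1 → (sigFull n σ σlast (j + 1)).1 = 1)
    (hmax : ∀ t, 2 * k + 1 < t → t ≤ 2 * n + 1 →
      plVal n σ σlast t < plVal n σ σlast (2 * k + 1))
    {j : ℕ} (hkj : k < j) (hjn : j < n) :
    plVal n σ σlast (2 * j + 2) ≤ plVal n σ σlast (2 * k + 1) - 3 / 2 := by
  rcases hS (2 * j + 1) with hup | hdown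
  · have hup' : plSlope n σ σlast (2 * j + 2) = 1 := by
      rw [plSlope_two_mul_add_one] at hup
      rw [show 2 * j + 2 = 2 * (j + 1) by ring, plSlope_two_mul]
      exact hC2 j hjn hup
    have hnext := plVal_odd_le_sub_one hS hmax (j := j + 1) (by omega) hjn
    rw [show 2 * (j + 1) + 1 = 2 * j + 2 + 1 by ring, plVal_succ, hup'] at hnext
    push_cast at hnext
    linarith
  · have hcur := plVal_odd_le_sub_one hS hmax hkj hjn.le
    rw [plVal_succ, hdown]
    push_cast
    linarith

theorem plVal_le_sub_one
    (hS : ∀ t, plSlope n σ σlast t = 1 ∨ plSlope n σ σlast t = -1)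
    (hC2 : ∀ j < n, (sigFull n σ σlast j).2 = 1 → (sigFull n σ σlast (j + 1)).1 = 1)
    (hmax : ∀ t, 2 * k + 1 < t → t ≤ 2 * n + 1 →
      plVal n σ σlast t < plVal n σ σlast (2 * k + 1))
    {t : ℕ} (hkt : 2 * k + 3 ≤ t) (htn : t ≤ 2 * n + 1) :
    plVal n σ σlast t ≤ plVal n σ σlast (2 * k + 1) - 1 := by
  obtain ⟨j, rfl | rfl⟩ : ∃ j, t = 2 * j + 1 ∨ t = 2 * j + 2 := ⟨(t - 1) / 2, by omega⟩
  · exact plVal_odd_le_sub_one hS hmax (by omega) (by omega)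
  · linarith [plVal_even_le_sub_three_halves hS hC2 hmax (j := j) (by omega) (by omega)]

theorem plSlope_eq_neg_one_of_lastMax
    (hS : ∀ t, plSlope n σ σlast t = 1 ∨ plSlope n σ σlast t = -1)
    (hmax : ∀ t, 2 * k + 1 < t → t ≤ 2 * n + 1 →
      plVal n σ σlast t < plVal n σ σlast (2 * k + 1))
    (hkn : k < n) :
    plSlope n σ σlast (2 * k + 1) = -1 ∧ plSlope n σ σlast (2 * k + 2) = -1 := by
  have h := plVal_odd_le_sub_one hS hmax (j := k + 1) (by omega) hkn
  rw [show 2 * (k + 1) + 1 = 2 * k + 1 + 1 + 1 by ring, plVal_succ, plVal_succ] at h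
  have hsum : plSlope n σ σlast (2 * k + 1) + plSlope n σ σlast (2 * k + 2) ≤ -2 := by
    have : (plSlope n σ σlast (2 * k + 1) : ℝ) + plSlope n σ σlast (2 * k + 2) ≤ -2 := by
      linarith
    exact_mod_cast this
  rcases hS (2 * k + 1) with h₁ | h₁ <;> rcases hS (2 * k + 2) with h₂ | h₂ <;> omega

theorem plVal_two_mul_add_three_of_lastMax
    (hS : ∀ t, plSlope n σ σlast t = 1 ∨ plSlope n σ σlast t = -1)
    (hmax : ∀ t, 2 * k + 1 < t → t ≤ 2 * n + 1 →
      plVal n σ σlast t < plVal n σ σlast (2 * k + 1))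
    (hkn : k < n) :
    plVal n σ σlast (2 * k + 3) = plVal n σ σlast (2 * k + 1) - 1 := by
  obtain ⟨h₁, h₂⟩ := plSlope_eq_neg_one_of_lastMax hS hmax hkn
  rw [plVal_succ, plVal_succ, h₁, h₂]
  push_cast
  ring

theorem plSlope_two_mul_add_three_of_lastMax
    (hS : ∀ t, plSlope n σ σlast t = 1 ∨ plSlope n σ σlast t = -1)
    (hC2 : ∀ j < n, (sigFull n σ σlast j).2 = 1 → (sigFull n σ σlast (j + 1)).1 = 1)
    (hmax : ∀ t, 2 * k + 1 < t → t ≤ 2 * n + 1 →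
      plVal n σ σlast t < plVal n σ σlast (2 * k + 1))
    (hkn : k + 1 < n) :
    plSlope n σ σlast (2 * k + 3) = -1 := by
  have hnext := plVal_even_le_sub_three_halves hS hC2 hmax (j := k + 1) (by omega) hkn
  rw [show 2 * (k + 1) + 2 = 2 * k + 3 + 1 by ring, plVal_succ,
    plVal_two_mul_add_three_of_lastMax hS hmax (by omega)] at hnext
  rcases hS (2 * k + 3) with h | h
  · rw [h] at hnext
    push_cast at hnext
    linarith
  · exact h

end

theorem pl_after_last_max_general (n : ℕ) (σ : Fin n → ℤ × ℤ) (σlast : ℤ)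
    (hσ : ∀ j : Fin n, ((σ j).1 = 1 ∨ (σ j).1 = -1) ∧ ((σ j).2 = 1 ∨ (σ j).2 = -1))
    (hlast : σlast = 1 ∨ σlast = -1)
    (hC2 : ∀ j < n, (sigFull n σ σlast j).2 = 1 → (sigFull n σ σlast (j + 1)).1 = 1)
    (M : ℝ)
    (hM : IsGreatest (plFun n σ σlast '' Set.Icc 0 ((n : ℝ) + 1/2)) M)
    (hMend : plFun n σ σlast ((n : ℝ) + 1/2) < M)
    (k : ℕ)
    (hk : IsGreatest {x : ℝ | x ∈ Set.Icc (0 : ℝ) ((n : ℝ) + 1/2) ∧ plFun n σ σlast x = M}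
      ((k : ℝ) - 1/2)) :
    k ≤ n ∧ (k < n → sigFull n σ σlast k = (-1, -1)) ∧ (k = n → σlast = -1) ∧
      plFun n σ σlast ((k : ℝ) + 1/2) = M - 1 ∧
      ∀ x ∈ Set.Icc ((k : ℝ) + 1/2) ((n : ℝ) + 1/2), plFun n σ σlast x ≤ M - 1 := by
  have hS := plSlope_eq_one_or_neg_one hσ hlast
  obtain ⟨k, rfl⟩ : ∃ k', k = k' + 1 :=
    Nat.exists_eq_add_one.2 (by have := hk.1.1.1; exact_mod_cast (by linarith : (0 : ℝ) < k))
  have hhalf : ((k + 1 : ℕ) : ℝ) - 1/2 = ((2 * k + 1 : ℕ) : ℝ) / 2 := by push_cast; ring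
  have hval : plVal n σ σlast (2 * k + 1) = M := by
    rw [← plFun_half, ← hhalf]
    exact hk.1.2
  have hmax : ∀ t, 2 * k + 1 < t → t ≤ 2 * n + 1 →
      plVal n σ σlast t < plVal n σ σlast (2 * k + 1) := fun t hkt htn =>
    hval ▸ plVal_lt_of_lt_isGreatest hM hk (by rw [hhalf]; gcongr) htn
  have hkn : k < n := by
    have : (k : ℝ) ≤ n := by have := hk.1.1.2; push_cast at this; linarith
    rcases (show k ≤ n by exact_mod_cast this).lt_or_eq with h | rfl
    · exact h
    · have := hk.1.2
      rw [show ((k + 1 : ℕ) : ℝ) - 1/2 = k + 1/2 by push_cast; ring] at this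
      exact absurd this hMend.ne
  have hright : ((k + 1 : ℕ) : ℝ) + 1/2 = ((2 * k + 3 : ℕ) : ℝ) / 2 := by push_cast; ring
  have hnext := (plSlope_eq_neg_one_of_lastMax hS hmax hkn).2
  rw [show 2 * k + 2 = 2 * (k + 1) by ring, plSlope_two_mul] at hnext
  refine ⟨hkn, fun hlt => Prod.ext hnext ?_, fun heq => ?_, ?_, ?_⟩
  · rw [← plSlope_two_mul_add_one, show 2 * (k + 1) + 1 = 2 * k + 3 by ring]
    exact plSlope_two_mul_add_three_of_lastMax hS hC2 hmax hlt
  · simpa [heq, sigFull] using hnext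
  · rw [hright, plFun_half, plVal_two_mul_add_three_of_lastMax hS hmax hkn, hval]
  · rw [hright,
      show (n : ℝ) + 1/2 = ((2 * n + 1 : ℕ) : ℝ) / 2 by push_cast; ring, ← hval]
    exact plFun_le_of_plVal_le fun t hkt htn => plVal_le_sub_one hS hC2 hmax hkt htn

/-- Under (C1), (C2): if `M = max g > g(n + 1/2)` and `k - 1/2 = max g⁻¹(M)`, then
`k ≤ n`, `σ_{k+1} = (-1,-1)` (resp. `σ_{n+1} = -1` if `k = n`), `g(k + 1/2) = M - 1`,
and `g(x) ≤ M - 1` for `k + 1/2 ≤ x ≤ n + 1/2`. -/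
theorem pl_after_last_max (n : ℕ) (σ : Fin n → ℤ × ℤ) (σlast : ℤ)
    (hσ : ∀ j : Fin n, ((σ j).1 = 1 ∨ (σ j).1 = -1) ∧ ((σ j).2 = 1 ∨ (σ j).2 = -1))
    (hlast : σlast = 1 ∨ σlast = -1)
    (hC1 : (sigFull n σ σlast 0).1 = 1)
    (hC2 : ∀ j < n, (sigFull n σ σlast j).2 = 1 → (sigFull n σ σlast (j + 1)).1 = 1)
    (M : ℝ)
    (hM : IsGreatest (plFun n σ σlast '' Set.Icc 0 ((n : ℝ) + 1/2)) M)
    (hMend : plFun n σ σlast ((n : ℝ) + 1/2) < M)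
    (k : ℕ)
    (hk : IsGreatest {x : ℝ | x ∈ Set.Icc (0 : ℝ) ((n : ℝ) + 1/2) ∧ plFun n σ σlast x = M}
      ((k : ℝ) - 1/2)) :
    k ≤ n ∧ (k < n → sigFull n σ σlast k = (-1, -1)) ∧ (k = n → σlast = -1) ∧
      plFun n σ σlast ((k : ℝ) + 1/2) = M - 1 ∧
      ∀ x ∈ Set.Icc ((k : ℝ) + 1/2) ((n : ℝ) + 1/2), plFun n σ σlast x ≤ M - 1 :=
  pl_after_last_max_general n σ σlast hσ hlast hC2 M hM hMend k hk
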